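/- Let n ≥ 2 and let X be a spherical design of harmonic index 2 on S^{n-1} with exactly n points. Then ⟨x, y⟩ = 0 for all distinct x, y ∈ X; that is, X is an orthonormal basis of ℝ^n. -/

import Mathlib

open scoped BigOperators Classical

/-- The Laplacian `∑ i, ∂²/∂xᵢ²` of a multivariate polynomial. -/
noncomputable def mvLaplacian {n : ℕ} (f : MvPolynomial (Fin n) ℝ) : MvPolynomial (Fin n) ℝ :=
  ∑ i, MvPolynomial.pderiv i (MvPolynomial.pderiv i f)

/-- A finite nonempty subset `X` of the unit sphere `S^{n-1} ⊆ ℝ^n` is a spherical design of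
harmonic index `t` if `∑_{x ∈ X} f(x) = 0` for every harmonic homogeneous polynomial `f`
of degree `t`. -/
def IsHarmonicIndexDesign (n t : ℕ) (X : Finset (Fin n → ℝ)) : Prop :=
  X.Nonempty ∧ (∀ x ∈ X, ∑ i, x i ^ 2 = 1) ∧
    ∀ f : MvPolynomial (Fin n) ℝ, mvLaplacian f = 0 → f.IsHomogeneous t →
      ∑ x ∈ X, MvPolynomial.eval x f = 0

open MvPolynomial in
lemma aux_pderiv_ite {n : ℕ} (c d : Fin n) (x : Fin n) :
    pderiv x (if c = x then X d else 0 : MvPolynomial (Fin n) ℝ)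
      = if c = x ∧ d = x then 1 else 0 := by
  split_ifs with h1 h2 h3 <;> simp_all [pderiv_X, Pi.single_apply]

open MvPolynomial in
lemma aux_lap_mul {n : ℕ} (a b : Fin n) (hab : a ≠ b) :
    mvLaplacian (X a * X b : MvPolynomial (Fin n) ℝ) = 0 := by
  simp only [mvLaplacian, pderiv_mul, pderiv_X, Pi.single_apply, map_add, aux_pderiv_ite,
    mul_ite, ite_mul, one_mul, mul_one, mul_zero, zero_mul]
  rw [Finset.sum_eq_zero]
  intro x _
  split_ifs with h1 h2 <;> simp_all

open MvPolynomial in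
lemma aux_lap_sub {n : ℕ} (a b : Fin n) :
    mvLaplacian (X a ^ 2 - X b ^ 2 : MvPolynomial (Fin n) ℝ) = 0 := by
  simp only [mvLaplacian, pow_two, pderiv_mul, pderiv_X, Pi.single_apply, map_add, map_sub,
    aux_pderiv_ite, mul_ite, ite_mul, one_mul, mul_one, mul_zero, zero_mul]
  simp [Finset.sum_add_distrib, Finset.sum_ite_eq]

/-- a spherical design of harmonic index `2` on `S^{n-1}` with exactly `n` points
consists of pairwise orthogonal (hence orthonormal) vectors, i.e. it is an orthonormal basis
of `ℝ^n`. -/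
theorem harmonic_index_two_design_card_eq_orthonormal (n : ℕ) (hn : 2 ≤ n)
    (X : Finset (Fin n → ℝ)) (hX : IsHarmonicIndexDesign n 2 X) (hcard : X.card = n) :
    ∀ x ∈ X, ∀ y ∈ X, x ≠ y → ∑ i, x i * y i = 0 := by
  obtain ⟨-, hsph, hdes⟩ := hX
  have hoff : ∀ i j : Fin n, i ≠ j → ∑ x ∈ X, x i * x j = 0 := by
    intro i j hij
    have := hdes (MvPolynomial.X i * MvPolynomial.X j) (aux_lap_mul i j hij)
      (by simpa using (MvPolynomial.isHomogeneous_X ℝ i).mul (MvPolynomial.isHomogeneous_X ℝ j))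
    simpa using this
  have hdiag : ∀ i : Fin n, ∑ x ∈ X, x i * x i = 1 := by
    have heq : ∀ i j : Fin n, ∑ x ∈ X, x i ^ 2 = ∑ x ∈ X, x j ^ 2 := by
      intro i j
      have := hdes (MvPolynomial.X i ^ 2 - MvPolynomial.X j ^ 2) (aux_lap_sub i j)
        (((MvPolynomial.isHomogeneous_X ℝ i).pow 2).sub
          ((MvPolynomial.isHomogeneous_X ℝ j).pow 2))
      simp only [map_sub, map_pow, MvPolynomial.eval_X, Finset.sum_sub_distrib] at this
      linarith
    intro i
    have htot : ∑ j : Fin n, ∑ x ∈ X, x j ^ 2 = n := by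
      rw [Finset.sum_comm]
      rw [Finset.sum_congr rfl fun x hx => hsph x hx]
      simp [hcard]
    have hconst : ∑ j : Fin n, ∑ x ∈ X, x j ^ 2 = n * ∑ x ∈ X, x i ^ 2 := by
      rw [Finset.sum_congr rfl fun j _ => heq j i]
      simp [mul_comm]
    have hn0 : (n : ℝ) ≠ 0 := by positivity
    have : ∑ x ∈ X, x i ^ 2 = 1 := by
      field_simp at hconst ⊢
      rw [htot] at hconst
      exact (mul_right_cancel₀ hn0 (by linarith)).symm
    simpa [pow_two] using this
  -- Gram matrix argument
  have hcard' : X.card = n := hcard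
  let e := X.equivFinOfCardEq hcard'
  let A : Matrix (Fin n) (Fin n) ℝ := fun k i => (e.symm k : Fin n → ℝ) i
  have hATA : A.transpose * A = 1 := by
    ext i j
    rw [Matrix.mul_apply]
    have hsum : ∑ k : Fin n, A.transpose i k * A k j = ∑ x ∈ X, x i * x j := by
      rw [← Finset.sum_coe_sort X (fun x => x i * x j),
        ← Equiv.sum_comp e.symm (fun x : X => (x : Fin n → ℝ) i * (x : Fin n → ℝ) j)]
      rfl
    rw [hsum]
    by_cases h : i = j
    · subst h; simp [Matrix.one_apply, hdiag i]
    · simp [Matrix.one_apply, h, hoff i j h]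
  have hAAT : A * A.transpose = 1 := mul_eq_one_comm.mp hATA
  intro x hx y hy hxy
  have hne : e ⟨x, hx⟩ ≠ e ⟨y, hy⟩ := by
    simp only [ne_eq, EmbeddingLike.apply_eq_iff_eq, Subtype.mk.injEq]
    exact hxy
  have := congrFun (congrFun hAAT (e ⟨x, hx⟩)) (e ⟨y, hy⟩)
  rw [Matrix.mul_apply] at this
  have h1 : (1 : Matrix (Fin n) (Fin n) ℝ) (e ⟨x, hx⟩) (e ⟨y, hy⟩) = 0 :=
    Matrix.one_apply_ne hne
  rw [h1] at this
  have hx' : ∀ i, A (e ⟨x, hx⟩) i = x i := fun i => by simp [A, e]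
  have hy' : ∀ i, A.transpose i (e ⟨y, hy⟩) = y i := fun i => by rw [Matrix.transpose_apply]; simp [A, e]
  rw [← this]
  refine Finset.sum_congr rfl fun i _ => ?_
  rw [hx' i, hy' i]
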